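/- For every a ∈ ℝⁿ and every ε > 0, the set {x ∈ ℝⁿ : a and x are ε-close to antipodal} is a convex subset of ℝⁿ; likewise, the set {x ∈ ℝⁿ : a and x are ε-close to podal} is convex. -/

import Mathlib

open scoped RealInnerProductSpace

open scoped Classical in
/-- The lazy random walk matrix of a graph `G` with degree parameter `d`. -/
noncomputable def lazyWalk {n : ℕ} (G : SimpleGraph (Fin n)) (d : ℕ) :
    Matrix (Fin n) (Fin n) ℝ :=
  Matrix.of fun u v =>
    if u = v then 1 - ((G.neighborSet u).ncard : ℝ) / (2 * d)
    else if G.Adj u v then 1 / (2 * d) else 0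

/-- `G` has maximum degree at most `d`. -/
def MaxDegreeLE {n : ℕ} (G : SimpleGraph (Fin n)) (d : ℕ) : Prop :=
  ∀ v, (G.neighborSet v).ncard ≤ d

/-- `p_u^t`: the endpoint distribution of a length-`t` lazy random walk from `u`. -/
noncomputable def pvec {n : ℕ} (G : SimpleGraph (Fin n)) (d t : ℕ) (u : Fin n) :
    EuclideanSpace ℝ (Fin n) :=
  WithLp.toLp 2 fun v => ((lazyWalk G d ^ t).mulVec fun w => if w = u then 1 else 0) v

/-- `q_u^t = p_u^t - (1/n) 𝟙`. -/
noncomputable def qvec {n : ℕ} (G : SimpleGraph (Fin n)) (d t : ℕ) (u : Fin n) :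
    EuclideanSpace ℝ (Fin n) :=
  WithLp.toLp 2 fun v => pvec G d t u v - 1 / n

/-- `q_u^0 = 1_u - (1/n) 𝟙`. -/
noncomputable def qzero {n : ℕ} (u : Fin n) : EuclideanSpace ℝ (Fin n) :=
  WithLp.toLp 2 fun v => (if v = u then 1 else 0) - 1 / n

/-- average of `q_u^0` over `u ∈ S`. -/
noncomputable def qavg {n : ℕ} (S : Finset (Fin n)) : EuclideanSpace ℝ (Fin n) :=
  (S.card : ℝ)⁻¹ • ∑ u ∈ S, qzero u

/-- `a` and `b` are `ε`-close to collinear. -/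
def CloseCollinear {E : Type*} [NormedAddCommGroup E] [NormedSpace ℝ E]
    (ε : ℝ) (a b : E) : Prop :=
  ∃ (ea eb w : E) (s s' : ℝ),
    ‖ea‖ ≤ ε ∧ ‖eb‖ ≤ ε ∧ a + ea = s • w ∧ b + eb = s' • w

/-- `a` and `b` are `ε`-close to antipodal. -/
def CloseAntipodal {E : Type*} [NormedAddCommGroup E] [NormedSpace ℝ E]
    (ε : ℝ) (a b : E) : Prop :=
  ∃ (ea eb w : E) (s s' : ℝ), 0 ≤ s ∧ 0 ≤ s' ∧
    ‖ea‖ ≤ ε ∧ ‖eb‖ ≤ ε ∧ a + ea = s • w ∧ b + eb = -(s' • w)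

/-- `a` and `b` are `ε`-close to podal. -/
def ClosePodal {E : Type*} [NormedAddCommGroup E] [NormedSpace ℝ E]
    (ε : ℝ) (a b : E) : Prop :=
  ∃ (ea eb w : E) (s s' : ℝ), 0 ≤ s ∧ 0 ≤ s' ∧
    ‖ea‖ ≤ ε ∧ ‖eb‖ ≤ ε ∧ a + ea = s • w ∧ b + eb = s' • w

/-- The Gram matrix `A_{u,v}` of two vectors. -/
noncomputable def gram2 {n : ℕ} (a b : EuclideanSpace ℝ (Fin n)) :
    Matrix (Fin 2) (Fin 2) ℝ :=
  !![‖a‖ ^ 2, ⟪a, b⟫; ⟪b, a⟫, ‖b‖ ^ 2]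

/-- Number of edges of `G` between `S` and `C \ S` (for `S ⊆ C`). -/
noncomputable def cutEdgesIn {n : ℕ} (G : SimpleGraph (Fin n)) (C S : Finset (Fin n)) : ℕ :=
  {p : Fin n × Fin n | p.1 ∈ S ∧ p.2 ∈ C ∧ p.2 ∉ S ∧ G.Adj p.1 p.2}.ncard

/-- Number of edges of `G` between `S` and its complement. -/
noncomputable def cutEdges {n : ℕ} (G : SimpleGraph (Fin n)) (S : Finset (Fin n)) : ℕ :=
  cutEdgesIn G Finset.univ S

/-- The cut conductance `φ_G(S) = e(S, V∖S) / (d|S|)`. -/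
noncomputable def cutCond {n : ℕ} (G : SimpleGraph (Fin n)) (d : ℕ) (S : Finset (Fin n)) : ℝ :=
  (cutEdges G S : ℝ) / (d * S.card)

/-- The (inner) conductance of the induced subgraph `G[C]` is at least `φ`. -/
def InnerConductanceGE {n : ℕ} (G : SimpleGraph (Fin n)) (d : ℕ) (C : Finset (Fin n))
    (φ : ℝ) : Prop :=
  ∀ S ⊆ C, S.Nonempty → 2 * S.card ≤ C.card →
    φ ≤ (cutEdgesIn G C S : ℝ) / (d * S.card)

/-- `G` is `(2, φ)`-clusterable. -/
def Clusterable2 {n : ℕ} (G : SimpleGraph (Fin n)) (d : ℕ) (φ : ℝ) : Prop :=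
  InnerConductanceGE G d Finset.univ φ ∨
  ∃ C₁ C₂ : Finset (Fin n), C₁.Nonempty ∧ C₂.Nonempty ∧ Disjoint C₁ C₂ ∧
    C₁ ∪ C₂ = Finset.univ ∧ InnerConductanceGE G d C₁ φ ∧ InnerConductanceGE G d C₂ φ

/-- `G` is `ε`-far from `(2, φ)`-clusterable. -/
def FarFromClusterable2 {n : ℕ} (G : SimpleGraph (Fin n)) (d : ℕ) (ε φ : ℝ) : Prop :=
  ∀ G' : SimpleGraph (Fin n), MaxDegreeLE G' d →
    ((symmDiff G.edgeSet G'.edgeSet).ncard : ℝ) ≤ ε * d * n →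
    ¬ Clusterable2 G' d φ

/-- The span of the eigenvectors of `M` with eigenvalue greater than `c`. -/
noncomputable def heavySpace {n : ℕ} (M : Matrix (Fin n) (Fin n) ℝ) (c : ℝ) :
    Submodule ℝ (EuclideanSpace ℝ (Fin n)) :=
  ⨆ μ : {μ : ℝ // c < μ}, Module.End.eigenspace (Matrix.toEuclideanLin M) (μ : ℝ)

/-- Orthogonal projection onto the span of the eigenvectors of `M` with eigenvalue
greater than `c`. -/
noncomputable def heavyProj {n : ℕ} (M : Matrix (Fin n) (Fin n) ℝ) (c : ℝ)
    (x : EuclideanSpace ℝ (Fin n)) : EuclideanSpace ℝ (Fin n) :=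
  ((heavySpace M c).orthogonalProjection x : EuclideanSpace ℝ (Fin n))

/-!
If `‖a‖ ≤ ε`, moving `a` to the origin makes every `x` `ε`-close to antipodal. Otherwise
`a + e_a ≠ 0` spans the line, so the antipodal set is exactly `closedBall 0 ε - K` for the cone
`K = [0, ∞) • closedBall a ε`, and a cone over a convex set is convex. Negating `x` exchanges
podal and antipodal.
-/

open Metric Pointwise

theorem Convex.Ici_zero_smul {𝕜 E : Type*} [Field 𝕜] [LinearOrder 𝕜] [IsStrictOrderedRing 𝕜]
    [AddCommGroup E] [Module 𝕜 E] {C : Set E} (hC : Convex 𝕜 C) :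
    Convex 𝕜 (Set.Ici (0 : 𝕜) • C) := by
  rintro _ ⟨l₁, hl₁ : 0 ≤ l₁, p₁, hp₁, rfl⟩ _ ⟨l₂, hl₂ : 0 ≤ l₂, p₂, hp₂, rfl⟩ t u ht hu -
  obtain ⟨q, hq, hcombo⟩ :=
    hC.exists_mem_add_smul_eq hp₁ hp₂ (mul_nonneg ht hl₁) (mul_nonneg hu hl₂)
  rw [smul_smul, smul_smul, ← hcombo]
  exact Set.smul_mem_smul (Set.mem_Ici.2 (by positivity)) hq

section

variable {E : Type*} [NormedAddCommGroup E] [NormedSpace ℝ E]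

theorem closePodal_iff_closeAntipodal_neg {ε : ℝ} {a x : E} :
    ClosePodal ε a x ↔ CloseAntipodal ε a (-x) := by
  constructor
  · rintro ⟨ea, eb, w, s, s', hs, hs', hea, heb, ha, hx⟩
    exact ⟨ea, -eb, w, s, s', hs, hs', hea, by rwa [norm_neg], ha, by rw [← hx, neg_add]⟩
  · rintro ⟨ea, eb, w, s, s', hs, hs', hea, heb, ha, hx⟩
    refine ⟨ea, -eb, w, s, s', hs, hs', hea, by rwa [norm_neg], ha, ?_⟩
    rw [← neg_neg (s' • w), ← hx, neg_add, neg_neg]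

theorem closeAntipodal_of_norm_le {ε : ℝ} {a : E} (ha : ‖a‖ ≤ ε) (x : E) :
    CloseAntipodal ε a x :=
  ⟨-a, 0, -x, 0, 1, le_rfl, zero_le_one, by rwa [norm_neg],
    by simpa using (norm_nonneg a).trans ha, by simp, by simp⟩

theorem setOf_closeAntipodal_eq {ε : ℝ} {a : E} (ha : ε < ‖a‖) :
    {x | CloseAntipodal ε a x} = closedBall 0 ε - Set.Ici (0 : ℝ) • closedBall a ε := by
  ext x
  constructor
  · rintro ⟨ea, eb, w, s, s', hs, hs', hea, heb, ha', hx⟩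
    have hs_pos : 0 < s := by
      refine hs.lt_of_ne' fun hs0 => ha.not_ge ?_
      rw [hs0, zero_smul, add_eq_zero_iff_eq_neg] at ha'
      rwa [ha', norm_neg]
    refine ⟨-eb, by simpa using heb, (s' / s) • (a + ea),
      Set.smul_mem_smul (Set.mem_Ici.2 (div_nonneg hs' hs)) (by simpa [dist_eq_norm] using hea), ?_⟩
    show -eb - _ = x
    rw [ha', smul_smul, div_mul_cancel₀ _ hs_pos.ne', eq_sub_of_add_eq hx]
    abel
  · rintro ⟨y, hy, _, ⟨l, hl, p, hp, rfl⟩, rfl⟩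
    refine ⟨p - a, -y, p, 1, l, zero_le_one, hl, by rwa [← dist_eq_norm], ?_, ?_, ?_⟩
    · simpa using hy
    · simp
    · show y - l • p + -y = _
      abel

end

theorem stmt8_general {n : ℕ} (a : EuclideanSpace ℝ (Fin n)) (ε : ℝ) :
    Convex ℝ {x : EuclideanSpace ℝ (Fin n) | CloseAntipodal ε a x} ∧
    Convex ℝ {x : EuclideanSpace ℝ (Fin n) | ClosePodal ε a x} := by
  have antipodal : Convex ℝ {x : EuclideanSpace ℝ (Fin n) | CloseAntipodal ε a x} := by
    rcases le_or_gt ‖a‖ ε with ha | ha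
    · convert convex_univ
      exact Set.eq_univ_of_forall (closeAntipodal_of_norm_le ha)
    · rw [setOf_closeAntipodal_eq ha]
      exact (convex_closedBall 0 ε).sub (convex_closedBall a ε).Ici_zero_smul
  have podal_eq : {x | ClosePodal ε a x} = -{x | CloseAntipodal ε a x} := by
    ext x
    exact closePodal_iff_closeAntipodal_neg
  exact ⟨antipodal, podal_eq ▸ antipodal.neg⟩

theorem stmt8 {n : ℕ} (a : EuclideanSpace ℝ (Fin n)) (ε : ℝ) (hε : 0 < ε) :
    Convex ℝ {x : EuclideanSpace ℝ (Fin n) | CloseAntipodal ε a x} ∧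
    Convex ℝ {x : EuclideanSpace ℝ (Fin n) | ClosePodal ε a x} :=
  stmt8_general a ε
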